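/- If the belief MDP of a POMDP has finitely many reachable states, then the FSC F_B obtained from an optimal memoryless belief policy σ_B (with nodes the reachable beliefs, action function γ(b,z) = σ_B(b), and update δ(b,z,z') = the Bayesian successor of b under σ_B(b) and z') induces on the POMDP the same reachability probability of T as σ_B achieves in the belief MDP, namely the optimal value sup over observation-based policies. -/

import Mathlib

open scoped ENNReal Classical

/-- Probability `P(b,α,z')` of observing `z'` after taking action `a` in belief `b`. -/
noncomputable def obsProb {S A Z : Type*} (P : S → A → S → ℝ≥0∞) (O : S → Z)
    (b : S → ℝ≥0∞) (a : A) (z' : Z) : ℝ≥0∞ :=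
  ∑' s, b s * ∑' s', (if O s' = z' then P s a s' else 0)

/-- Bayesian belief update `⟦b,α,z'⟧`. -/
noncomputable def beliefUpdate {S A Z : Type*} (P : S → A → S → ℝ≥0∞) (O : S → Z)
    (b : S → ℝ≥0∞) (a : A) (z' : Z) : S → ℝ≥0∞ :=
  fun s' => if O s' = z' then (∑' s, b s * P s a s') / obsProb P O b a z' else 0

/-- A belief is a target belief iff it is supported on states with the target observation. -/
def targetBelief {S Z : Type*} (O : S → Z) (zT : Z) (b : S → ℝ≥0∞) : Prop :=
  ∀ s, b s ≠ 0 → O s = zT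

/-- `n`-step maximal reachability of target beliefs in the belief MDP (value iteration). -/
noncomputable def beliefMaxReachN {S A Z : Type*} [Fintype Z]
    (P : S → A → S → ℝ≥0∞) (O : S → Z) (zT : Z) : ℕ → (S → ℝ≥0∞) → ℝ≥0∞
  | 0, b => if targetBelief O zT b then 1 else 0
  | n + 1, b => if targetBelief O zT b then 1 else
      ⨆ a, ∑ z' : Z, obsProb P O b a z' *
        beliefMaxReachN P O zT n (beliefUpdate P O b a z')

/-- Maximal reachability probability of target beliefs in the belief MDP. -/
noncomputable def beliefMaxReach {S A Z : Type*} [Fintype Z]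
    (P : S → A → S → ℝ≥0∞) (O : S → Z) (zT : Z) (b : S → ℝ≥0∞) : ℝ≥0∞ :=
  ⨆ n, beliefMaxReachN P O zT n b

/-- `n`-step reachability of target beliefs in the belief MC induced by the memoryless
belief policy `σB`. -/
noncomputable def beliefPolReachN {S A Z : Type*} [Fintype Z]
    (P : S → A → S → ℝ≥0∞) (O : S → Z) (zT : Z) (σB : (S → ℝ≥0∞) → A) :
    ℕ → (S → ℝ≥0∞) → ℝ≥0∞
  | 0, b => if targetBelief O zT b then 1 else 0
  | n + 1, b => if targetBelief O zT b then 1 else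
      ∑ z' : Z, obsProb P O b (σB b) z' *
        beliefPolReachN P O zT σB n (beliefUpdate P O b (σB b) z')

/-- Reachability probability of target beliefs in the belief MC induced by `σB`. -/
noncomputable def beliefPolReach {S A Z : Type*} [Fintype Z]
    (P : S → A → S → ℝ≥0∞) (O : S → Z) (zT : Z) (σB : (S → ℝ≥0∞) → A)
    (b : S → ℝ≥0∞) : ℝ≥0∞ :=
  ⨆ n, beliefPolReachN P O zT σB n b

/-- The set of beliefs reachable from `b0` in the belief MDP. -/
inductive ReachableBelief {S A Z : Type*} (P : S → A → S → ℝ≥0∞) (O : S → Z)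
    (b0 : S → ℝ≥0∞) : (S → ℝ≥0∞) → Prop
  | init : ReachableBelief P O b0 b0
  | step {b : S → ℝ≥0∞} (a : A) (z' : Z) :
      ReachableBelief P O b0 b → obsProb P O b a z' ≠ 0 →
      ReachableBelief P O b0 (beliefUpdate P O b a z')

/-- `n`-step reachability probability of `T` in a Markov chain. -/
noncomputable def mcReachN {St : Type*} (Q : St → St → ℝ≥0∞) (T : Set St) :
    ℕ → St → ℝ≥0∞
  | 0, s => if s ∈ T then 1 else 0
  | n + 1, s => if s ∈ T then 1 else ∑' s', Q s s' * mcReachN Q T n s'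

/-- Reachability probability of `T` in a Markov chain. -/
noncomputable def mcReach {St : Type*} (Q : St → St → ℝ≥0∞) (T : Set St) (s : St) : ℝ≥0∞ :=
  ⨆ n, mcReachN Q T n s

/-- Transition matrix of the MC induced on a POMDP by an FSC `(γ, δ)` with node type `N`. -/
noncomputable def inducedQ {S A Z N : Type*} (P : S → A → S → ℝ≥0∞) (O : S → Z)
    (γ : N → Z → A) (δ : N → Z → Z → N) : (S × N) → (S × N) → ℝ≥0∞ :=
  fun p q =>
    (if q.2 = δ p.2 (O p.1) (O q.1) then (1 : ℝ≥0∞) else 0) * P p.1 (γ p.2 (O p.1)) q.1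

/-- A finite path: an initial state followed by a list of (action, state) steps. -/
structure FPath (S A : Type*) where
  first : S
  steps : List (A × S)

/-- The last state of a finite path. -/
def FPath.last {S A : Type*} (π : FPath S A) : S :=
  match π.steps.getLast? with
  | none => π.first
  | some p => p.2

/-- Extending a finite path by one step. -/
def FPath.extend {S A : Type*} (π : FPath S A) (a : A) (s : S) : FPath S A :=
  ⟨π.first, π.steps ++ [(a, s)]⟩

/-- The observation trace of a finite path. -/
def obsTrace {S A Z : Type*} (O : S → Z) (π : FPath S A) : Z × List (A × Z) :=
  (O π.first, π.steps.map (fun p => (p.1, O p.2)))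

/-- A (history-dependent) policy is observation-based if it only depends on the
observation trace of the path. -/
def ObsBased {S A Z : Type*} (O : S → Z) (σ : FPath S A → A) : Prop :=
  ∀ π π' : FPath S A, obsTrace O π = obsTrace O π' → σ π = σ π'

/-- `n`-step reachability probability of `T` under a history-dependent policy `σ`. -/
noncomputable def polReachN {S A : Type*} (P : S → A → S → ℝ≥0∞) (T : Set S)
    (σ : FPath S A → A) : ℕ → FPath S A → ℝ≥0∞
  | 0, π => if π.last ∈ T then 1 else 0
  | n + 1, π => if π.last ∈ T then 1 else
      ∑' s', P π.last (σ π) s' * polReachN P T σ n (π.extend (σ π) s')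

/-- Reachability probability of `T` from `s0` under a history-dependent policy `σ`. -/
noncomputable def polReach {S A : Type*} (P : S → A → S → ℝ≥0∞) (T : Set S)
    (σ : FPath S A → A) (s0 : S) : ℝ≥0∞ :=
  ⨆ n, polReachN P T σ n ⟨s0, []⟩

/-!
Under an observation-based policy, the states compatible with an observation history are
distributed according to the Bayesian belief, and the policy cannot distinguish them. Weighting
path values by the belief therefore turns one step of the POMDP into one step of the belief MDP.
By induction on the horizon, every observation-based policy is bounded by the value-iteration
optimum of the belief MDP, while the FSC `F_B`, whose memory node is always the current belief,
achieves at least what `σB` achieves there; optimality of `σB` closes the chain of inequalities.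
Finally the product chain of an FSC moves exactly as the path policy it induces, so the chain of
`F_B` has the same value.
-/

section ENNReal

variable {ι : Type*}

theorem exists_ne_zero_of_tsum_eq_one {w : ι → ℝ≥0∞} (hw : ∑' i, w i = 1) : ∃ i, w i ≠ 0 := by
  by_contra! h
  simp [h] at hw

theorem tsum_dirac_mul (i₀ : ι) (f : ι → ℝ≥0∞) :
    ∑' i, (if i = i₀ then 1 else 0) * f i = f i₀ := by
  simp [ite_mul]

theorem sum_mul_le_sum_mul_of_ne_zero (s : Finset ι) {w f g : ι → ℝ≥0∞}
    (h : ∀ i, w i ≠ 0 → f i ≤ g i) : ∑ i ∈ s, w i * f i ≤ ∑ i ∈ s, w i * g i := by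
  refine Finset.sum_le_sum fun i _ => ?_
  by_cases hi : w i = 0
  · simp [hi]
  · exact mul_le_mul_right (h i hi) _

end ENNReal

section BeliefUpdate

variable {S A Z : Type*} (P : S → A → S → ℝ≥0∞) (O : S → Z)

theorem obsProb_le_one (hP : ∀ s a, ∑' s', P s a s' = 1) {b : S → ℝ≥0∞}
    (hb : ∑' s, b s = 1) (a : A) (z' : Z) : obsProb P O b a z' ≤ 1 :=
  calc obsProb P O b a z'
      ≤ ∑' s, b s * ∑' s', P s a s' := by
        refine ENNReal.tsum_le_tsum fun s => mul_le_mul_right ?_ _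
        exact ENNReal.tsum_le_tsum fun s' => by split_ifs <;> simp
    _ = 1 := by simp [hP, hb]

theorem obsProb_ne_top (hP : ∀ s a, ∑' s', P s a s' = 1) {b : S → ℝ≥0∞}
    (hb : ∑' s, b s = 1) (a : A) (z' : Z) : obsProb P O b a z' ≠ ⊤ :=
  ((obsProb_le_one P O hP hb a z').trans_lt ENNReal.one_lt_top).ne

theorem tsum_ite_tsum_mul_eq_obsProb (b : S → ℝ≥0∞) (a : A) (z' : Z) :
    ∑' s', (if O s' = z' then ∑' s, b s * P s a s' else 0) = obsProb P O b a z' :=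
  calc ∑' s', (if O s' = z' then ∑' s, b s * P s a s' else 0)
      = ∑' s', ∑' s, b s * (if O s' = z' then P s a s' else 0) :=
        tsum_congr fun s' => by split_ifs <;> simp
    _ = obsProb P O b a z' := by
        rw [ENNReal.tsum_comm]
        exact tsum_congr fun s => ENNReal.tsum_mul_left

theorem tsum_mul_eq_zero_of_obsProb_eq_zero {b : S → ℝ≥0∞} {a : A} {z' : Z}
    (h : obsProb P O b a z' = 0) {s' : S} (hs' : O s' = z') : ∑' s, b s * P s a s' = 0 := by
  rw [← tsum_ite_tsum_mul_eq_obsProb, ENNReal.tsum_eq_zero] at h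
  simpa [hs'] using h s'

theorem tsum_beliefUpdate (hP : ∀ s a, ∑' s', P s a s' = 1) {b : S → ℝ≥0∞}
    (hb : ∑' s, b s = 1) {a : A} {z' : Z} (hz' : obsProb P O b a z' ≠ 0) :
    ∑' s', beliefUpdate P O b a z' s' = 1 := by
  have hdiv : ∑' s', beliefUpdate P O b a z' s'
      = (∑' s', if O s' = z' then ∑' s, b s * P s a s' else 0) / obsProb P O b a z' := by
    rw [div_eq_mul_inv, ← ENNReal.tsum_mul_right]
    exact tsum_congr fun s' => by unfold beliefUpdate; split_ifs <;> simp [div_eq_mul_inv]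
  rw [hdiv, tsum_ite_tsum_mul_eq_obsProb]
  exact ENNReal.div_self hz' (obsProb_ne_top P O hP hb a z')

theorem eq_of_beliefUpdate_ne_zero {b : S → ℝ≥0∞} {a : A} {z' : Z} {s' : S}
    (h : beliefUpdate P O b a z' s' ≠ 0) : O s' = z' := by
  by_contra hne
  exact h (if_neg hne)

theorem targetBelief_beliefUpdate (b : S → ℝ≥0∞) (a : A) (z : Z) :
    targetBelief O z (beliefUpdate P O b a z) :=
  fun _ => eq_of_beliefUpdate_ne_zero P O

/-- Conditioning a one-step expectation on the next observation: observation `z'` has weight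
`obsProb`, and given it the next state is distributed according to the Bayesian update. -/
theorem tsum_mul_tsum_eq_sum_obsProb_mul [Fintype Z] (hP : ∀ s a, ∑' s', P s a s' = 1)
    {b : S → ℝ≥0∞} (hb : ∑' s, b s = 1) (a : A) (G : S → Z → ℝ≥0∞) :
    ∑' s, b s * ∑' s', P s a s' * G s' (O s')
      = ∑ z' : Z, obsProb P O b a z' * ∑' s', beliefUpdate P O b a z' s' * G s' z' :=
  calc ∑' s, b s * ∑' s', P s a s' * G s' (O s')
      = ∑' s', (∑' s, b s * P s a s') * G s' (O s') := by
        simp_rw [← ENNReal.tsum_mul_left, ← ENNReal.tsum_mul_right, mul_assoc]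
        exact ENNReal.tsum_comm
    _ = ∑' s', ∑ z' : Z, (if O s' = z' then (∑' s, b s * P s a s') * G s' z' else 0) :=
        tsum_congr fun s' => by simp
    _ = ∑ z' : Z, ∑' s', (if O s' = z' then (∑' s, b s * P s a s') * G s' z' else 0) :=
        Summable.tsum_finsetSum fun _ _ => ENNReal.summable
    _ = ∑ z' : Z, obsProb P O b a z' * ∑' s', beliefUpdate P O b a z' s' * G s' z' := by
        refine Finset.sum_congr rfl fun z' _ => ?_
        rw [← ENNReal.tsum_mul_left]
        refine tsum_congr fun s' => ?_
        unfold beliefUpdate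
        by_cases hz : O s' = z'
        · by_cases h0 : obsProb P O b a z' = 0
          · simp [hz, h0, tsum_mul_eq_zero_of_obsProb_eq_zero P O h0 hz]
          · rw [if_pos hz, if_pos hz, ← mul_assoc,
              ENNReal.mul_div_cancel h0 (obsProb_ne_top P O hP hb a z')]
        · simp [hz]

end BeliefUpdate

section Paths

variable {S A Z : Type*} (P : S → A → S → ℝ≥0∞) (O : S → Z) (T : Set S)

@[simp]
theorem FPath.last_extend (π : FPath S A) (a : A) (s : S) : (π.extend a s).last = s := by
  simp [FPath.extend, FPath.last]

theorem obsTrace_extend (π : FPath S A) (a : A) (s : S) :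
    obsTrace O (π.extend a s) = ((obsTrace O π).1, (obsTrace O π).2 ++ [(a, O s)]) := by
  simp [obsTrace, FPath.extend]

theorem polReachN_of_last_mem (σ : FPath S A → A) (n : ℕ) {π : FPath S A} (h : π.last ∈ T) :
    polReachN P T σ n π = 1 := by
  cases n <;> simp [polReachN, h]

/-- Since targets are absorbing, the one-step recursion of `polReachN` holds at target states too. -/
theorem polReachN_succ_of_absorbing (habs : ∀ s ∈ T, ∀ a s', P s a s' = if s' = s then 1 else 0)
    (σ : FPath S A → A) (n : ℕ) (π : FPath S A) :
    polReachN P T σ (n + 1) π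
      = ∑' s', P π.last (σ π) s' * polReachN P T σ n (π.extend (σ π) s') := by
  by_cases h : π.last ∈ T
  · simp_rw [polReachN_of_last_mem P T σ _ h, habs _ h]
    rw [tsum_eq_single π.last fun s' hs' => by simp [hs'],
      polReachN_of_last_mem P T σ _ (by simpa using h)]
    simp
  · simp [polReachN, h]

theorem polReachN_congr {σ : FPath S A → A} (hσ : ObsBased O σ) (n : ℕ) {π π' : FPath S A}
    (htr : obsTrace O π = obsTrace O π') (hlast : π.last = π'.last) :
    polReachN P T σ n π = polReachN P T σ n π' := by
  induction n generalizing π π' with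
  | zero => simp [polReachN, hlast]
  | succ n ih =>
    simp only [polReachN, hlast, hσ π π' htr]
    congr 1
    refine tsum_congr fun s' => congrArg _ (ih ?_ (by simp))
    rw [obsTrace_extend, obsTrace_extend, htr]

end Paths

section FSC

variable {S A Z N : Type*} (P : S → A → S → ℝ≥0∞) (O : S → Z) (T : Set S)

/-- The pair (memory node, current observation) of the FSC `(γ, δ)` started in node `n₀`,
after reading an observation trace. -/
def fscState (δ : N → Z → Z → N) (n₀ : N) (τ : Z × List (A × Z)) : N × Z :=
  τ.2.foldl (fun q p => (δ q.1 q.2 p.2, p.2)) (n₀, τ.1)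

def fscPolicy (γ : N → Z → A) (δ : N → Z → Z → N) (n₀ : N) (π : FPath S A) : A :=
  Function.uncurry γ (fscState δ n₀ (obsTrace O π))

theorem fscPolicy_obsBased (γ : N → Z → A) (δ : N → Z → Z → N) (n₀ : N) :
    ObsBased O (fscPolicy O γ δ n₀) :=
  fun π π' h => by rw [fscPolicy, fscPolicy, h]

theorem fscState_extend (δ : N → Z → Z → N) (n₀ : N) (π : FPath S A) (a : A) (s : S) :
    fscState δ n₀ (obsTrace O (π.extend a s))
      = (δ (fscState δ n₀ (obsTrace O π)).1 (fscState δ n₀ (obsTrace O π)).2 (O s), O s) := by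
  rw [obsTrace_extend]
  simp [fscState, List.foldl_append]

theorem fscState_snd (δ : N → Z → Z → N) (n₀ : N) (π : FPath S A) :
    (fscState δ n₀ (obsTrace O π)).2 = O π.last := by
  obtain ⟨s, steps⟩ := π
  rcases List.eq_nil_or_concat steps with rfl | ⟨l, p, rfl⟩
  · rfl
  · simpa [FPath.last, FPath.extend] using
      congrArg Prod.snd (fscState_extend O δ n₀ ⟨s, l⟩ p.1 p.2)

theorem tsum_inducedQ_mul (γ : N → Z → A) (δ : N → Z → Z → N) (p : S × N)
    (f : S × N → ℝ≥0∞) :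
    ∑' q, inducedQ P O γ δ p q * f q
      = ∑' s', P p.1 (γ p.2 (O p.1)) s' * f (s', δ p.2 (O p.1) (O s')) := by
  rw [ENNReal.tsum_prod (f := fun s' n => inducedQ P O γ δ p (s', n) * f (s', n))]
  refine tsum_congr fun s' => ?_
  rw [tsum_eq_single (δ p.2 (O p.1) (O s')) fun n hn => by simp [inducedQ, hn]]
  simp [inducedQ]

theorem mcReachN_inducedQ_eq_polReachN (γ : N → Z → A) (δ : N → Z → Z → N) (n₀ : N)
    (n : ℕ) (π : FPath S A) :
    mcReachN (inducedQ P O γ δ) {p | p.1 ∈ T} n (π.last, (fscState δ n₀ (obsTrace O π)).1)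
      = polReachN P T (fscPolicy O γ δ n₀) n π := by
  induction n generalizing π with
  | zero => simp [mcReachN, polReachN]
  | succ n ih =>
    simp only [mcReachN, polReachN, Set.mem_ofPred_eq, tsum_inducedQ_mul, fscPolicy,
      Function.uncurry, fscState_snd]
    congr 1
    refine tsum_congr fun s' => congrArg _ ?_
    rw [← ih, FPath.last_extend, fscState_extend, fscState_snd]

theorem mcReach_inducedQ_eq_polReach (γ : N → Z → A) (δ : N → Z → Z → N) (n₀ : N) (s₀ : S) :
    mcReach (inducedQ P O γ δ) {p | p.1 ∈ T} (s₀, n₀) = polReach P T (fscPolicy O γ δ n₀) s₀ :=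
  iSup_congr fun n => mcReachN_inducedQ_eq_polReachN P O T γ δ n₀ n ⟨s₀, []⟩

end FSC

section ObsConsistent

variable {S A Z : Type*} (P : S → A → S → ℝ≥0∞) (O : S → Z) (T : Set S) (zT : Z)

/-- `b` is a belief over the end states of a family of paths that no observation-based policy
can tell apart. -/
def ObsConsistent (b : S → ℝ≥0∞) (πf : S → FPath S A) : Prop :=
  (∀ s, (πf s).last = s) ∧ ∀ s t, b s ≠ 0 → b t ≠ 0 → obsTrace O (πf s) = obsTrace O (πf t)

theorem obsConsistent_dirac (s₀ : S) :
    ObsConsistent O (fun s => if s = s₀ then 1 else 0) (fun s => (⟨s, []⟩ : FPath S A)) := by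
  refine ⟨fun _ => rfl, fun s t hs ht => ?_⟩
  obtain rfl : s = s₀ := by simpa using hs
  obtain rfl : t = s := by simpa using ht
  rfl

theorem obsConsistent_beliefUpdate (b : S → ℝ≥0∞) (π : FPath S A) (a : A) (z' : Z) :
    ObsConsistent O (beliefUpdate P O b a z') (fun s' => π.extend a s') := by
  refine ⟨fun _ => FPath.last_extend .., fun s t hs ht => ?_⟩
  rw [obsTrace_extend, obsTrace_extend, eq_of_beliefUpdate_ne_zero P O hs,
    eq_of_beliefUpdate_ne_zero P O ht]

theorem tsum_mul_polReachN_of_targetBelief (hT : ∀ s, s ∈ T ↔ O s = zT) {b : S → ℝ≥0∞}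
    (hb : ∑' s, b s = 1) (ht : targetBelief O zT b) {πf : S → FPath S A}
    (hlast : ∀ s, (πf s).last = s) (σ : FPath S A → A) (n : ℕ) :
    ∑' s, b s * polReachN P T σ n (πf s) = 1 := by
  rw [← hb]
  refine tsum_congr fun s => ?_
  by_cases hs : b s = 0
  · simp [hs]
  · rw [polReachN_of_last_mem P T σ n (by rw [hlast, hT]; exact ht s hs), mul_one]

theorem tsum_mul_polReachN_zero_le_obsProb (hT : ∀ s, s ∈ T ↔ O s = zT)
    (habs : ∀ s ∈ T, ∀ a s', P s a s' = if s' = s then 1 else 0) (b : S → ℝ≥0∞)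
    {πf : S → FPath S A} (hlast : ∀ s, (πf s).last = s) (σ : FPath S A → A) (a : A) :
    ∑' s, b s * polReachN P T σ 0 (πf s) ≤ obsProb P O b a zT := by
  refine ENNReal.tsum_le_tsum fun s => mul_le_mul_right ?_ _
  simp only [polReachN, hlast]
  split_ifs with hs
  · refine le_of_eq_of_le ?_ (ENNReal.le_tsum s)
    simp [(hT s).1 hs, habs s hs]
  · exact zero_le

/-- The action is common to the whole family, so one step of the POMDP is one step of the belief
MDP, each next observation leading to the updated belief and the extended family. -/
theorem tsum_mul_polReachN_succ [Fintype Z] (hP : ∀ s a, ∑' s', P s a s' = 1)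
    (habs : ∀ s ∈ T, ∀ a s', P s a s' = if s' = s then 1 else 0)
    {σ : FPath S A → A} (hσ : ObsBased O σ) {b : S → ℝ≥0∞} (hb : ∑' s, b s = 1)
    {πf : S → FPath S A} (hπf : ObsConsistent O b πf) {s₀ : S} (hs₀ : b s₀ ≠ 0) (n : ℕ) :
    ∑' s, b s * polReachN P T σ (n + 1) (πf s)
      = ∑ z' : Z, obsProb P O b (σ (πf s₀)) z' * ∑' s', beliefUpdate P O b (σ (πf s₀)) z' s'
          * polReachN P T σ n ((πf s₀).extend (σ (πf s₀)) s') := by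
  set a := σ (πf s₀)
  have hstep : ∀ s, b s ≠ 0 → polReachN P T σ (n + 1) (πf s)
      = ∑' s', P s a s' * polReachN P T σ n ((πf s₀).extend a s') := by
    intro s hs
    have htr := hπf.2 s s₀ hs hs₀
    rw [polReachN_succ_of_absorbing P T habs, hπf.1 s, hσ _ _ htr]
    refine tsum_congr fun s' => congrArg _ (polReachN_congr P O T hσ n ?_ (by simp))
    rw [obsTrace_extend, obsTrace_extend, htr]
  rw [← tsum_mul_tsum_eq_sum_obsProb_mul P O hP hb a
    fun s' _ => polReachN P T σ n ((πf s₀).extend a s')]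
  refine tsum_congr fun s => ?_
  by_cases hs : b s = 0
  · simp [hs]
  · rw [hstep s hs]

end ObsConsistent

section BeliefMDP

variable {S A Z : Type*} [Fintype Z] (P : S → A → S → ℝ≥0∞) (O : S → Z) (T : Set S) (zT : Z)

theorem beliefMaxReachN_of_targetBelief {b : S → ℝ≥0∞} (ht : targetBelief O zT b) (n : ℕ) :
    beliefMaxReachN (A := A) P O zT n b = 1 := by
  cases n <;> simp [beliefMaxReachN, ht]

theorem beliefPolReachN_of_targetBelief (σB : (S → ℝ≥0∞) → A) {b : S → ℝ≥0∞}
    (ht : targetBelief O zT b) (n : ℕ) : beliefPolReachN P O zT σB n b = 1 := by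
  cases n <;> simp [beliefPolReachN, ht]

theorem sum_obsProb_mul_le_beliefMaxReachN_succ {b : S → ℝ≥0∞} (ht : ¬targetBelief O zT b)
    (a : A) (n : ℕ) :
    ∑ z' : Z, obsProb P O b a z' * beliefMaxReachN P O zT n (beliefUpdate P O b a z')
      ≤ beliefMaxReachN P O zT (n + 1) b := by
  rw [beliefMaxReachN, if_neg ht]
  exact le_iSup (fun a => ∑ z' : Z, obsProb P O b a z'
    * beliefMaxReachN P O zT n (beliefUpdate P O b a z')) a

theorem obsProb_le_sum_obsProb_mul_beliefMaxReachN (b : S → ℝ≥0∞) (a : A) (n : ℕ) :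
    obsProb P O b a zT
      ≤ ∑ z' : Z, obsProb P O b a z' * beliefMaxReachN P O zT n (beliefUpdate P O b a z') := by
  refine le_of_eq_of_le ?_ (Finset.single_le_sum (fun _ _ => zero_le) (Finset.mem_univ zT))
  rw [beliefMaxReachN_of_targetBelief P O zT (targetBelief_beliefUpdate P O b a zT), mul_one]

/-- The extra step is the one in which the belief catches up with a state that has just
entered `T`. -/
theorem tsum_mul_polReachN_le_beliefMaxReachN_succ (hP : ∀ s a, ∑' s', P s a s' = 1)
    (hT : ∀ s, s ∈ T ↔ O s = zT) (habs : ∀ s ∈ T, ∀ a s', P s a s' = if s' = s then 1 else 0)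
    {σ : FPath S A → A} (hσ : ObsBased O σ) (n : ℕ) {b : S → ℝ≥0∞} (hb : ∑' s, b s = 1)
    {πf : S → FPath S A} (hπf : ObsConsistent O b πf) :
    ∑' s, b s * polReachN P T σ n (πf s) ≤ beliefMaxReachN P O zT (n + 1) b := by
  by_cases ht : targetBelief O zT b
  · rw [tsum_mul_polReachN_of_targetBelief P O T zT hT hb ht hπf.1,
      beliefMaxReachN_of_targetBelief P O zT ht]
  obtain ⟨s₀, hs₀⟩ := exists_ne_zero_of_tsum_eq_one hb
  refine le_trans ?_ (sum_obsProb_mul_le_beliefMaxReachN_succ P O zT ht (σ (πf s₀)) n)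
  cases n with
  | zero =>
    exact (tsum_mul_polReachN_zero_le_obsProb P O T zT hT habs b hπf.1 σ _).trans
      (obsProb_le_sum_obsProb_mul_beliefMaxReachN P O zT b _ 0)
  | succ n =>
    rw [tsum_mul_polReachN_succ P O T hP habs hσ hb hπf hs₀]
    refine sum_mul_le_sum_mul_of_ne_zero _ fun z' hz' => ?_
    exact tsum_mul_polReachN_le_beliefMaxReachN_succ hP hT habs hσ n
      (tsum_beliefUpdate P O hP hb hz') (obsConsistent_beliefUpdate P O b _ _ z')

theorem beliefPolReachN_le_tsum_mul_polReachN_fscPolicy (hP : ∀ s a, ∑' s', P s a s' = 1)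
    (hT : ∀ s, s ∈ T ↔ O s = zT) (habs : ∀ s ∈ T, ∀ a s', P s a s' = if s' = s then 1 else 0)
    (σB : (S → ℝ≥0∞) → A) (b₀ : S → ℝ≥0∞) (n : ℕ) {b : S → ℝ≥0∞} (hb : ∑' s, b s = 1)
    {πf : S → FPath S A} (hπf : ObsConsistent O b πf)
    (hnode : ∀ s, b s ≠ 0 →
      (fscState (fun b _ z' => beliefUpdate P O b (σB b) z') b₀ (obsTrace O (πf s))).1 = b) :
    beliefPolReachN P O zT σB n b
      ≤ ∑' s, b s * polReachN P T (fscPolicy O (fun b _ => σB b)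
          (fun b _ z' => beliefUpdate P O b (σB b) z') b₀) n (πf s) := by
  by_cases ht : targetBelief O zT b
  · rw [beliefPolReachN_of_targetBelief P O zT σB ht,
      tsum_mul_polReachN_of_targetBelief P O T zT hT hb ht hπf.1]
  cases n with
  | zero => simp [beliefPolReachN, ht]
  | succ n =>
    obtain ⟨s₀, hs₀⟩ := exists_ne_zero_of_tsum_eq_one hb
    have hact : fscPolicy O (fun b _ => σB b) (fun b _ z' => beliefUpdate P O b (σB b) z') b₀
        (πf s₀) = σB b :=
      congrArg σB (hnode s₀ hs₀)
    rw [tsum_mul_polReachN_succ P O T hP habs (fscPolicy_obsBased O _ _ b₀) hb hπf hs₀, hact,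
      beliefPolReachN, if_neg ht]
    refine sum_mul_le_sum_mul_of_ne_zero _ fun z' hz' => ?_
    refine beliefPolReachN_le_tsum_mul_polReachN_fscPolicy hP hT habs σB b₀ n
      (tsum_beliefUpdate P O hP hb hz') (obsConsistent_beliefUpdate P O b _ _ z') fun s' hs' => ?_
    rw [fscState_extend, hnode s₀ hs₀, eq_of_beliefUpdate_ne_zero P O hs']

theorem polReach_le_beliefMaxReach (hP : ∀ s a, ∑' s', P s a s' = 1)
    (hT : ∀ s, s ∈ T ↔ O s = zT) (habs : ∀ s ∈ T, ∀ a s', P s a s' = if s' = s then 1 else 0)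
    {σ : FPath S A → A} (hσ : ObsBased O σ) (s₀ : S) :
    polReach P T σ s₀ ≤ beliefMaxReach (A := A) P O zT (fun s => if s = s₀ then 1 else 0) :=
  iSup_le fun n =>
    calc polReachN P T σ n ⟨s₀, []⟩
        = ∑' s, (if s = s₀ then 1 else 0) * polReachN P T σ n ⟨s, []⟩ :=
          (tsum_dirac_mul s₀ fun s => polReachN P T σ n ⟨s, []⟩).symm
      _ ≤ beliefMaxReachN P O zT (n + 1) (fun s => if s = s₀ then 1 else 0) :=
        tsum_mul_polReachN_le_beliefMaxReachN_succ P O T zT hP hT habs hσ n (tsum_ite_eq s₀ 1)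
          (obsConsistent_dirac O s₀)
      _ ≤ _ := le_iSup (fun n => beliefMaxReachN P O zT n _) (n + 1)

theorem beliefPolReach_le_polReach_fscPolicy (hP : ∀ s a, ∑' s', P s a s' = 1)
    (hT : ∀ s, s ∈ T ↔ O s = zT) (habs : ∀ s ∈ T, ∀ a s', P s a s' = if s' = s then 1 else 0)
    (σB : (S → ℝ≥0∞) → A) (s₀ : S) :
    beliefPolReach P O zT σB (fun s => if s = s₀ then 1 else 0)
      ≤ polReach P T (fscPolicy O (fun b _ => σB b) (fun b _ z' => beliefUpdate P O b (σB b) z')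
          (fun s => if s = s₀ then 1 else 0)) s₀ :=
  iSup_mono fun n =>
    (beliefPolReachN_le_tsum_mul_polReachN_fscPolicy P O T zT hP hT habs σB _ n
      (tsum_ite_eq s₀ 1) (obsConsistent_dirac O s₀) fun _ _ => rfl).trans_eq (tsum_dirac_mul s₀ _)

end BeliefMDP

theorem belief_fsc_attains_optimum_general
    {S A Z : Type*} [Fintype Z]
    (P : S → A → S → ℝ≥0∞) (hP : ∀ s a, ∑' s', P s a s' = 1)
    (O : S → Z) (s0 : S) (T : Set S) (zT : Z)
    (hT : ∀ s, s ∈ T ↔ O s = zT)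
    (habs : ∀ s ∈ T, ∀ a s', P s a s' = if s' = s then 1 else 0)
    (σB : (S → ℝ≥0∞) → A)
    (hopt : beliefPolReach P O zT σB (fun s => if s = s0 then 1 else 0)
          = beliefMaxReach (A := A) P O zT (fun s => if s = s0 then 1 else 0)) :
    mcReach
        (inducedQ P O (fun (b : S → ℝ≥0∞) (_ : Z) => σB b)
          (fun (b : S → ℝ≥0∞) (_ : Z) (z' : Z) => beliefUpdate P O b (σB b) z'))
        {p : S × (S → ℝ≥0∞) | p.1 ∈ T}
        (s0, fun s => if s = s0 then 1 else 0)
      = beliefPolReach P O zT σB (fun s => if s = s0 then 1 else 0) ∧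
    beliefPolReach P O zT σB (fun s => if s = s0 then 1 else 0)
      = ⨆ (σ : FPath S A → A) (_ : ObsBased O σ), polReach P T σ s0 := by
  set b₀ : S → ℝ≥0∞ := fun s => if s = s0 then 1 else 0
  set σF := fscPolicy O (fun b _ => σB b) (fun b _ z' => beliefUpdate P O b (σB b) z') b₀
  have hσF : ObsBased O σF := fscPolicy_obsBased O _ _ b₀
  have hupper : ∀ σ, ObsBased O σ → polReach P T σ s0 ≤ beliefPolReach P O zT σB b₀ :=
    fun σ hσ => hopt ▸ polReach_le_beliefMaxReach P O T zT hP hT habs hσ s0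
  have hσF_eq : polReach P T σF s0 = beliefPolReach P O zT σB b₀ :=
    (hupper σF hσF).antisymm (beliefPolReach_le_polReach_fscPolicy P O T zT hP hT habs σB s0)
  refine ⟨(mcReach_inducedQ_eq_polReach P O T _ _ b₀ s0).trans hσF_eq,
    le_antisymm ?_ (iSup₂_le hupper)⟩
  exact hσF_eq.symm.le.trans (le_iSup₂ (f := fun σ _ => polReach P T σ s0) σF hσF)

/-- if the belief MDP has finitely many reachable beliefs, the FSC `F_B`
obtained from an optimal memoryless belief policy `σB` (nodes: beliefs; action function
`γ(b,z) = σB(b)`; update `δ(b,z,z') = ⟦b, σB(b), z'⟧`) induces on the POMDP the same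
reachability probability of `T` as `σB` achieves in the belief MDP, namely the optimal
value, i.e. the supremum over all observation-based policies. -/
theorem belief_fsc_attains_optimum
    {S A Z : Type*} [Fintype Z]
    (P : S → A → S → ℝ≥0∞) (hP : ∀ s a, ∑' s', P s a s' = 1)
    (O : S → Z) (s0 : S) (T : Set S) (zT : Z)
    (hT : ∀ s, s ∈ T ↔ O s = zT)
    (habs : ∀ s ∈ T, ∀ a s', P s a s' = if s' = s then 1 else 0)
    (σB : (S → ℝ≥0∞) → A)
    (hfin : {b | ReachableBelief P O (fun s => if s = s0 then 1 else 0) b}.Finite)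
    (hopt : beliefPolReach P O zT σB (fun s => if s = s0 then 1 else 0)
          = beliefMaxReach (A := A) P O zT (fun s => if s = s0 then 1 else 0)) :
    mcReach
        (inducedQ P O (fun (b : S → ℝ≥0∞) (_ : Z) => σB b)
          (fun (b : S → ℝ≥0∞) (_ : Z) (z' : Z) => beliefUpdate P O b (σB b) z'))
        {p : S × (S → ℝ≥0∞) | p.1 ∈ T}
        (s0, fun s => if s = s0 then 1 else 0)
      = beliefPolReach P O zT σB (fun s => if s = s0 then 1 else 0) ∧
    beliefPolReach P O zT σB (fun s => if s = s0 then 1 else 0)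
      = ⨆ (σ : FPath S A → A) (_ : ObsBased O σ), polReach P T σ s0 :=
  belief_fsc_attains_optimum_general P hP O s0 T zT hT habs σB hopt
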